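/- Let W be a real vector space with a symmetric positive definite bilinear form B and a symmetric bilinear form Q, and suppose W = N ⊕ K ⊕ P is a B-orthogonal direct sum with N, K finite dimensional, such that Q is negative definite on N, positive definite on P, and Q[k, w] = 0 for all k ∈ K and w ∈ W. Let Q' be another symmetric bilinear form on W that is negative definite on N and positive definite on P, and let K̃ ⊆ W be a subspace with dim K̃ = dim K such that for each κ̃ ∈ K̃ there exists j(κ̃) ∈ K with Q'[κ̃, w] = B[j(κ̃), w] for all w ∈ W. Then W = N ⊕ K̃ ⊕ P. -/
import Mathlib


/-- stability of a `B`-orthogonal decomposition `W = N ⊕ K ⊕ P`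
(with `Q` negative definite on `N`, positive definite on `P`, and `K` in the
radical of `Q`) under replacing `K` by a subspace `K̃` of the same dimension,
provided `Q'` is negative definite on `N`, positive definite on `P`, and each
`κ̃ ∈ K̃` pairs under `Q'` like a `B`-pairing against an element of `K`.
Then `W = N ⊕ K̃ ⊕ P`. -/
theorem stmt_7 {W : Type*} [AddCommGroup W] [Module ℝ W]
    (B Q Q' : W →ₗ[ℝ] W →ₗ[ℝ] ℝ)
    (hBsymm : ∀ u v, B u v = B v u)
    (hBpos : ∀ w : W, w ≠ 0 → 0 < B w w)
    (hQsymm : ∀ u v, Q u v = Q v u)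
    (hQ'symm : ∀ u v, Q' u v = Q' v u)
    (N K P Ktil : Submodule ℝ W)
    [FiniteDimensional ℝ N] [FiniteDimensional ℝ K] [FiniteDimensional ℝ Ktil]
    -- B-orthogonal direct sum W = N ⊕ K ⊕ P
    (hNK : ∀ u ∈ N, ∀ v ∈ K, B u v = 0)
    (hNP : ∀ u ∈ N, ∀ v ∈ P, B u v = 0)
    (hKP : ∀ u ∈ K, ∀ v ∈ P, B u v = 0)
    (hspan : N ⊔ K ⊔ P = ⊤)
    -- definiteness properties of Q
    (hQnegN : ∀ u ∈ N, u ≠ 0 → Q u u < 0)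
    (hQposP : ∀ u ∈ P, u ≠ 0 → 0 < Q u u)
    (hQK : ∀ k ∈ K, ∀ w : W, Q k w = 0)
    -- definiteness properties of Q'
    (hQ'negN : ∀ u ∈ N, u ≠ 0 → Q' u u < 0)
    (hQ'posP : ∀ u ∈ P, u ≠ 0 → 0 < Q' u u)
    (hdim : Module.finrank ℝ Ktil = Module.finrank ℝ K)
    (hj : ∀ κ ∈ Ktil, ∃ k ∈ K, ∀ w : W, Q' κ w = B k w) :
    N ⊔ Ktil ⊔ P = ⊤ ∧ N ⊓ (Ktil ⊔ P) = ⊥ ∧ Ktil ⊓ P = ⊥ := by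

  classical
  set M := N ⊔ P with hM
  have hBzero : ∀ w : W, B w w = 0 → w = 0 := by
    intro w h
    by_contra hne
    have := hBpos w hne
    linarith
  -- Ktil ∩ M is trivial
  have hKtilM : ∀ w ∈ Ktil, w ∈ M → w = 0 := by
    intro w hw hwM
    rcases Submodule.mem_sup.mp hwM with ⟨n, hn, p, hp, hnp⟩
    rcases hj w hw with ⟨k, hk, hQ'B⟩
    have h1 : Q' w n = 0 := by
      rw [hQ'B, hBsymm]; exact hNK n hn k hk
    have h2 : Q' w p = 0 := by
      rw [hQ'B]; exact hKP k hk p hp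
    rw [← hnp] at h1 h2
    simp only [map_add, LinearMap.add_apply] at h1 h2
    have hsym : Q' p n = Q' n p := hQ'symm p n
    have hn0 : n = 0 := by
      by_contra hne
      have hneg := hQ'negN n hn hne
      have hpos : 0 ≤ Q' p p := by
        rcases eq_or_ne p 0 with rfl | hpe
        · simp
        · exact le_of_lt (hQ'posP p hp hpe)
      linarith
    subst hn0
    have hp0 : p = 0 := by
      by_contra hpe
      have := hQ'posP p hp hpe
      simp only [map_zero, LinearMap.zero_apply, zero_add] at h2
      linarith
    rw [← hnp, hp0]
    simp
  -- K ∩ M is trivial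
  have hKM : ∀ w ∈ K, w ∈ M → w = 0 := by
    intro w hw hwM
    rcases Submodule.mem_sup.mp hwM with ⟨n, hn, p, hp, hnp⟩
    apply hBzero
    have : B w w = B w n + B w p := by rw [← hnp]; simp; ring
    rw [this, hBsymm w n, hNK n hn w hw, hKP w hw p hp, add_zero]
  have hcompl : IsCompl M K := by
    constructor
    · rw [disjoint_iff]
      rw [Submodule.eq_bot_iff]
      intro w hw
      exact hKM w hw.2 hw.1
    · rw [codisjoint_iff, hM]
      rw [sup_assoc, sup_comm K P, ← sup_assoc] at hspan
      rw [hspan]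
  let e : (W ⧸ M) ≃ₗ[ℝ] K := Submodule.quotientEquivOfIsCompl M K hcompl
  haveI : FiniteDimensional ℝ (W ⧸ M) := LinearEquiv.finiteDimensional e.symm
  have hrk : Module.finrank ℝ Ktil = Module.finrank ℝ (W ⧸ M) := by
    rw [hdim, e.finrank_eq]
  let f : Ktil →ₗ[ℝ] W ⧸ M := M.mkQ.comp Ktil.subtype
  have hinj : Function.Injective f := by
    rw [← LinearMap.ker_eq_bot]
    rw [Submodule.eq_bot_iff]
    intro x hx
    have hx' : (x : W) ∈ M := by
      have : M.mkQ (x : W) = 0 := hx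
      rwa [Submodule.mkQ_apply, Submodule.Quotient.mk_eq_zero] at this
    have := hKtilM (x : W) x.2 hx'
    exact Subtype.ext this
  have hsurj : Function.Surjective f :=
    (LinearMap.injective_iff_surjective_of_finrank_eq_finrank hrk).mp hinj
  have hsupKM : Ktil ⊔ M = ⊤ := by
    rw [eq_top_iff]
    intro w _
    obtain ⟨⟨κ, hκ⟩, hfk⟩ := hsurj (Submodule.Quotient.mk w)
    have hdiff : w - κ ∈ M := by
      have : (Submodule.Quotient.mk κ : W ⧸ M) = Submodule.Quotient.mk w := hfk
      rw [Submodule.Quotient.eq] at this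
      simpa using M.neg_mem this
    exact Submodule.mem_sup.mpr ⟨κ, hκ, w - κ, hdiff, by abel⟩
  refine ⟨?_, ?_, ?_⟩
  · rw [sup_assoc, sup_comm Ktil P, ← sup_assoc, sup_comm (N ⊔ P) Ktil, ← hM]
    exact hsupKM
  · rw [Submodule.eq_bot_iff]
    intro w ⟨hwN, hwKP⟩
    rcases Submodule.mem_sup.mp hwKP with ⟨κ, hκ, p, hp, hκp⟩
    have hκM : κ ∈ M := by
      have : κ = w - p := by rw [← hκp]; abel
      rw [this]
      exact M.sub_mem (Submodule.mem_sup_left hwN) (Submodule.mem_sup_right hp)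
    have hκ0 : κ = 0 := hKtilM κ hκ hκM
    have hwp : w = p := by rw [← hκp, hκ0, zero_add]
    have hBwp := hNP w hwN p hp
    rw [← hwp] at hBwp
    exact hBzero w hBwp
  · rw [Submodule.eq_bot_iff]
    intro w ⟨hwK, hwP⟩
    exact hKtilM w hwK (Submodule.mem_sup_right hwP)
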